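/- For every ε>0 there exists a probabilistic finite state transducer that computes the relation R₁ = {(0^m 1^m, 2^m) : m ≥ 0} ⊆ {0,1}*×{2}* with probability 1−ε. -/

import Mathlib

/-!  Probabilistic finite state transducers (pfst), following
Freivalds & Winter, "Quantum Finite State Transducers". -/

section PFSTdefs

variable {Q Γ₁ Γ₂ : Type*}

/-- A probabilistic finite state transducer: a finite state set `Q`, input
alphabet `Γ₁` (with implicit begin/end markers `‡`,`$`), output alphabet `Γ₂`,
row-stochastic transition matrices for every letter and for the two markers,
output functions, an initial state, and disjoint sets of accepting and
rejecting states.  The end-marker matrix carries all probability from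
non-halting states into `acc ∪ rej`. -/
structure PFST (Q Γ₁ Γ₂ : Type*) [Fintype Q] [DecidableEq Q] where
  V : Γ₁ → Matrix Q Q ℝ
  Vbeg : Matrix Q Q ℝ
  Vend : Matrix Q Q ℝ
  out : Γ₁ → Q → List Γ₂
  outBeg : Q → List Γ₂
  outEnd : Q → List Γ₂
  init : Q
  acc : Finset Q
  rej : Finset Q
  acc_disj_rej : Disjoint acc rej
  nonneg : ∀ a q p, 0 ≤ V a q p
  nonnegBeg : ∀ q p, 0 ≤ Vbeg q p
  nonnegEnd : ∀ q p, 0 ≤ Vend q p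
  stochastic : ∀ a q, ∑ p, V a q p = 1
  stochasticBeg : ∀ q, ∑ p, Vbeg q p = 1
  stochasticEnd : ∀ q, ∑ p, Vend q p = 1
  endHalts : ∀ q, q ∉ acc → q ∉ rej → ∀ p, p ∉ acc → p ∉ rej → Vend q p = 0

variable [DecidableEq Γ₂]

/-- Probability that, starting from the (non-halting) state `q`, reading the
remaining list of computation steps (each step being a transition matrix
together with an output function), the machine eventually halts in an
accepting state having produced in total exactly the output word `w`.
In each step, being in state `q`, the word `s.2 q` is appended to the output
tape and the state moves to `p` with probability `s.1 q p`; the computation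
halts as soon as an accepting or rejecting state is entered. -/
def pAccAux (acc non : Finset Q) :
    List (Matrix Q Q ℝ × (Q → List Γ₂)) → Q → List Γ₂ → ℝ
  | [], _, _ => 0
  | s :: rest, q, w =>
      if s.2 q <+: w then
        (∑ p ∈ acc, s.1 q p) * (if w.drop (s.2 q).length = [] then 1 else 0)
          + ∑ p ∈ non, s.1 q p * pAccAux acc non rest p (w.drop (s.2 q).length)
      else 0

variable [Fintype Q] [DecidableEq Q]

/-- The list of computation steps on input `‡ v $`. -/
def PFST.steps (T : PFST Q Γ₁ Γ₂) (v : List Γ₁) :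
    List (Matrix Q Q ℝ × (Q → List Γ₂)) :=
  (T.Vbeg, T.outBeg) :: (v.map fun a => (T.V a, T.out a)) ++ [(T.Vend, T.outEnd)]

/-- `T.prob v w` : the probability that on input `‡ v $` the transducer halts
accepting, with exactly `w` written on the output tape. -/
def PFST.prob (T : PFST Q Γ₁ Γ₂) (v : List Γ₁) (w : List Γ₂) : ℝ :=
  pAccAux T.acc (Finset.univ \ (T.acc ∪ T.rej)) (T.steps v) T.init w

/-- `T` computes the relation `R` with probability `α`. -/
def PFST.Computes (T : PFST Q Γ₁ Γ₂) (R : Set (List Γ₁ × List Γ₂)) (α : ℝ) : Prop :=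
  ∀ v w, ((v, w) ∈ R → α ≤ T.prob v w) ∧ ((v, w) ∉ R → T.prob v w ≤ 1 - α)

/-- `T` computes the relation `R` with isolated cutpoint `α`. -/
def PFST.ComputesCutpoint (T : PFST Q Γ₁ Γ₂) (R : Set (List Γ₁ × List Γ₂)) (α : ℝ) : Prop :=
  ∃ ε > 0, ∀ v w, ((v, w) ∈ R → α + ε ≤ T.prob v w) ∧ ((v, w) ∉ R → T.prob v w ≤ α - ε)

/-- A deterministic finite state transducer: all transition probabilities
are `0` or `1`. -/
def PFST.IsDeterministic (T : PFST Q Γ₁ Γ₂) : Prop :=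
  (∀ a q p, T.V a q p = 0 ∨ T.V a q p = 1) ∧
  (∀ q p, T.Vbeg q p = 0 ∨ T.Vbeg q p = 1) ∧
  (∀ q p, T.Vend q p = 0 ∨ T.Vend q p = 1)

end PFSTdefs

/-- The relation `R₁ = {(0^m 1^m, 2^m) : m ≥ 0} ⊆ {0,1}* × {2}*` (input alphabet
`{0,1}`, the output symbol `2` being represented inside `Fin 3`). -/
def R₁ : Set (List (Fin 2) × List (Fin 3)) :=
  {p | ∃ m : ℕ, p.1 = List.replicate m 0 ++ List.replicate m 1 ∧
    p.2 = List.replicate m 2}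


namespace R1proof

inductive St (k : ℕ) : Type
  | zeros (c : Fin k)
  | ones (r c : Fin k)
  | dead
  deriving DecidableEq, Fintype

open St

/-- branch states -/
abbrev Br (k : ℕ) := Fin (k+1) × St (k+1)
/-- full state space: `inl none` = initial state, `inr true` = accept, `inr false` = reject -/
abbrev Qk (k : ℕ) := Option (Br k) ⊕ Bool

variable {k : ℕ}

def stepf (a : Fin 2) (s : Br k) : Br k :=
  match s with
  | (i, .zeros c) => if a = 0 then (i, .zeros ⟨(c.1+1) % (k+1), Nat.mod_lt _ k.succ_pos⟩)
      else (i, .ones c ⟨1 % (k+1), Nat.mod_lt _ k.succ_pos⟩)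
  | (i, .ones r c) => if a = 0 then (i, .dead)
      else (i, .ones r ⟨(c.1+1) % (k+1), Nat.mod_lt _ k.succ_pos⟩)
  | (i, .dead) => (i, .dead)

def outf (a : Fin 2) (s : Br k) : List (Fin 3) :=
  match s with
  | (i, .zeros c) => if a = 0 then (if c.1 < i.1 then [] else [2]) else (if 0 < i.1 then [2] else [])
  | (i, .ones _ c) => if a = 0 then [] else (if c.1 < i.1 then [2] else [])
  | (_, .dead) => []

def finf (s : Br k) : Bool :=
  match s with
  | (_, .zeros c) => decide (c.1 = 0)
  | (_, .ones r c) => decide (r = c)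
  | (_, .dead) => false

def finQ (q : Qk k) : Bool :=
  match q with
  | .inl (some s) => finf s
  | _ => false

def det (f : Qk k → Qk k) : Matrix (Qk k) (Qk k) ℝ := fun q p => if p = f q then 1 else 0

def endQ (q : Qk k) : Qk k := Sum.inr (finQ q)

def stepQ (a : Fin 2) (q : Qk k) : Qk k :=
  match q with
  | .inl (some s) => .inl (some (stepf a s))
  | x => x

def outQ (a : Fin 2) (q : Qk k) : List (Fin 3) :=
  match q with
  | .inl (some s) => outf a s
  | _ => []

def startSet (k : ℕ) : Finset (Qk k) :=
  Finset.univ.image fun i : Fin (k+1) => Sum.inl (some (i, St.zeros 0))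

def run (s : Br k) (v : List (Fin 2)) : Br k := v.foldl (fun t a => stepf a t) s

@[simp] lemma run_nil (s : Br k) : run s [] = s := rfl
@[simp] lemma run_cons (s : Br k) (a : Fin 2) (v : List (Fin 2)) :
    run s (a :: v) = run (stepf a s) v := rfl
lemma run_append (s : Br k) (u v : List (Fin 2)) :
    run s (u ++ v) = run (run s u) v := List.foldl_append

def Wout : Br k → List (Fin 2) → List (Fin 3)
  | _, [] => []
  | s, a :: v => outf a s ++ Wout (stepf a s) v

@[simp] lemma Wout_nil (s : Br k) : Wout s [] = [] := rfl
@[simp] lemma Wout_cons (s : Br k) (a : Fin 2) (v : List (Fin 2)) :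
    Wout s (a :: v) = outf a s ++ Wout (stepf a s) v := rfl
lemma Wout_append (s : Br k) (u v : List (Fin 2)) :
    Wout s (u ++ v) = Wout s u ++ Wout (run s u) v := by
  induction u generalizing s with
  | nil => simp
  | cons a u ih => simp [ih, List.append_assoc]

end R1proof

/-- number of `t < b` with `t % k < i` (output count on the ones). -/
def ob (k i b : ℕ) : ℕ := ((Finset.range b).filter fun t => t % k < i).card
/-- number of `t < a` with `¬ t % k < i` (output count on the zeros). -/
def za (k i a : ℕ) : ℕ := ((Finset.range a).filter fun t => ¬ t % k < i).card

@[simp] lemma ob_zero (k i : ℕ) : ob k i 0 = 0 := by simp [ob]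
@[simp] lemma za_zero (k i : ℕ) : za k i 0 = 0 := by simp [za]

lemma ob_succ (k i b : ℕ) : ob k i (b+1) = ob k i b + (if b % k < i then 1 else 0) := by
  unfold ob
  rw [Finset.range_add_one, Finset.filter_insert]
  split_ifs with h
  · rw [Finset.card_insert_of_notMem (by simp)]
  · simp

lemma za_succ (k i a : ℕ) : za k i (a+1) = za k i a + (if a % k < i then 0 else 1) := by
  unfold za
  rw [Finset.range_add_one, Finset.filter_insert]
  split_ifs with h
  · simp
  · rw [Finset.card_insert_of_notMem (by simp)]

lemma za_add_ob (k i a : ℕ) : za k i a + ob k i a = a := by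
  have := Finset.card_filter_add_card_filter_not
    (s := Finset.range a) (p := fun t => t % k < i)
  unfold za ob
  rw [add_comm]
  simpa using this

lemma ob_closed (k i : ℕ) (hk : 0 < k) (hi : i ≤ k) (b : ℕ) :
    ob k i b = i * (b / k) + min i (b % k) := by
  induction b with
  | zero => simp
  | succ b IH =>
    have hq := Nat.div_add_mod b k
    have hrk : b % k < k := Nat.mod_lt _ hk
    by_cases h : b % k + 1 = k
    · have h1 : b + 1 = k * (b / k + 1) := by
        have : k * (b / k + 1) = k * (b / k) + k := by ring
        omega
      have hdiv : (b+1)/k = b / k + 1 := by rw [h1, Nat.mul_div_cancel_left _ hk]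
      have hmod : (b+1)%k = 0 := by rw [h1, Nat.mul_mod_right]
      rw [ob_succ, IH, hdiv, hmod]
      have hm : i * (b / k + 1) = i * (b / k) + i := by ring
      rw [hm]
      split_ifs with hif <;> omega
    · have hlt : b % k + 1 < k := by omega
      have h1 : b + 1 = k * (b / k) + (b % k + 1) := by omega
      have hdiv : (b+1)/k = b / k := by
        rw [h1, Nat.mul_add_div hk, Nat.div_eq_of_lt hlt, add_zero]
      have hmod : (b+1)%k = b % k + 1 := by
        rw [h1, Nat.mul_add_mod, Nat.mod_eq_of_lt hlt]
      rw [ob_succ, IH, hdiv, hmod]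
      split_ifs with hif <;> omega

/-- key injectivity: with `a ≡ b [MOD k]`, `a ≠ b`, the total output counts
`za k i a + ob k i b` are distinct for distinct `i ≤ k`. -/
lemma N_inj (k a b : ℕ) (hk : 0 < k) (hmod : a % k = b % k) (hne : a ≠ b)
    {i j : ℕ} (hi : i ≤ k) (hj : j ≤ k)
    (h : za k i a + ob k i b = za k j a + ob k j b) : i = j := by
  have hA : a / k ≠ b / k := by
    intro hAB
    apply hne
    have h1 := Nat.div_add_mod a k
    have h2 := Nat.div_add_mod b k
    rw [hAB, hmod] at h1
    exact h1.symm.trans h2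
  have key : ∀ m, m ≤ k → za k m a + ob k m b + m * (a / k) = a + m * (b / k) := by
    intro m hm
    have e1 := za_add_ob k m a
    have e2 := ob_closed k m hk hm a
    have e3 := ob_closed k m hk hm b
    rw [hmod] at e2
    omega
  have ki := key i hi
  have kj := key j hj
  have hz : ((i:ℤ) - j) * ((a/k : ℕ) - (b/k : ℕ)) = 0 := by
    have ki' : (za k i a + ob k i b : ℤ) + i * (a / k : ℕ) = a + i * (b / k : ℕ) := by
      exact_mod_cast congrArg (Nat.cast : ℕ → ℤ) ki
    have kj' : (za k j a + ob k j b : ℤ) + j * (a / k : ℕ) = a + j * (b / k : ℕ) := by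
      exact_mod_cast congrArg (Nat.cast : ℕ → ℤ) kj
    have h' : (za k i a + ob k i b : ℤ) = (za k j a + ob k j b : ℤ) := by exact_mod_cast h
    linear_combination ki' - kj' - h'
  rcases mul_eq_zero.mp hz with h0 | h0
  · have : (i:ℤ) = j := by linarith
    exact_mod_cast this
  · exfalso
    apply hA
    have : ((a/k : ℕ) : ℤ) = ((b/k : ℕ) : ℤ) := by linarith
    exact_mod_cast this



namespace R1proof
variable {k : ℕ}

lemma run_zeros (i : Fin (k+1)) :
    ∀ a : ℕ, run ((i, St.zeros 0) : Br k) (List.replicate a 0)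
        = (i, St.zeros ⟨a % (k+1), Nat.mod_lt _ k.succ_pos⟩)
      ∧ Wout ((i, St.zeros 0) : Br k) (List.replicate a 0) = List.replicate (za (k+1) i.1 a) 2 := by
  intro a
  induction a with
  | zero => constructor <;> simp [Fin.ext_iff]
  | succ a IH =>
    obtain ⟨IH1, IH2⟩ := IH
    rw [List.replicate_succ' (n := a)]
    constructor
    · rw [run_append, IH1]
      simp only [run, List.foldl_cons, List.foldl_nil, stepf]
      simp [Fin.ext_iff, Nat.mod_add_mod]
    · rw [Wout_append, IH1, IH2, za_succ]
      by_cases h : a % (k+1) < i.1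
      · simp [Wout, outf, h]
      · simp [Wout, outf, h, List.replicate_succ']

lemma run_ones (i : Fin (k+1)) (r : Fin (k+1)) :
    ∀ b : ℕ, 1 ≤ b → run ((i, St.zeros r) : Br k) (List.replicate b 1)
        = (i, St.ones r ⟨b % (k+1), Nat.mod_lt _ k.succ_pos⟩)
      ∧ Wout ((i, St.zeros r) : Br k) (List.replicate b 1) = List.replicate (ob (k+1) i.1 b) 2 := by
  intro b hb
  induction b, hb using Nat.le_induction with
  | base =>
    constructor
    · rfl
    · have hob : ob (k+1) i.1 1 = if 0 < i.1 then 1 else 0 := by rw [ob_succ]; simp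
      rw [hob]
      by_cases h : 0 < i.1 <;>
        simp [Wout, outf, h, show (1:Fin 2) ≠ 0 from by decide]
  | succ b hb IH =>
    obtain ⟨IH1, IH2⟩ := IH
    rw [List.replicate_succ' (n := b)]
    constructor
    · rw [run_append, IH1]
      simp only [run, List.foldl_cons, List.foldl_nil, stepf]
      simp [Fin.ext_iff, Nat.mod_add_mod]
    · rw [Wout_append, IH1, IH2, ob_succ]
      by_cases h : b % (k+1) < i.1
      · simp [Wout, outf, h, show (1:Fin 2) ≠ 0 from by decide, List.replicate_succ']
      · simp [Wout, outf, h, show (1:Fin 2) ≠ 0 from by decide]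

/-- main run lemma: behaviour of branch `i` on a well-formed input. -/
lemma main_run (a b : ℕ) (i : Fin (k+1)) :
    finf (run ((i, St.zeros 0) : Br k) (List.replicate a 0 ++ List.replicate b 1))
        = decide (a % (k+1) = b % (k+1))
      ∧ Wout ((i, St.zeros 0) : Br k) (List.replicate a 0 ++ List.replicate b 1)
        = List.replicate (za (k+1) i.1 a + ob (k+1) i.1 b) 2 := by
  obtain ⟨h1, h2⟩ := run_zeros (k := k) i a
  rcases Nat.eq_zero_or_pos b with hb | hb
  · subst hb
    simp only [List.replicate_zero, List.append_nil, h1, h2, ob_zero, add_zero]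
    exact ⟨by simp [finf]; rfl, trivial⟩
  · obtain ⟨h3, h4⟩ := run_ones (k := k) i ⟨a % (k+1), Nat.mod_lt _ k.succ_pos⟩ b hb
    rw [run_append, Wout_append, h1, h2, h3, h4]
    constructor
    · simp [finf, Fin.ext_iff]
    · rw [← List.replicate_add]

lemma run_dead (i : Fin (k+1)) : ∀ v : List (Fin 2), run ((i, St.dead) : Br k) v = (i, St.dead) := by
  intro v
  induction v with
  | nil => rfl
  | cons a v ih => rw [run_cons, show stepf a ((i, St.dead) : Br k) = (i, St.dead) from rfl, ih]

lemma fin2_cases (a : Fin 2) : a = 0 ∨ a = 1 := by omega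

lemma ones_form (i : Fin (k+1)) :
    ∀ (v : List (Fin 2)) (r c : Fin (k+1)),
      finf (run ((i, St.ones r c) : Br k) v) = true → ∃ b, v = List.replicate b 1 := by
  intro v
  induction v with
  | nil => exact fun r c _ => ⟨0, rfl⟩
  | cons a v ih =>
    intro r c h
    rw [run_cons] at h
    rcases fin2_cases a with rfl | rfl
    · rw [show stepf (0:Fin 2) ((i, St.ones r c) : Br k) = (i, St.dead) by simp [stepf]] at h
      rw [run_dead] at h
      simp [finf] at h
    · have hs : stepf (1:Fin 2) ((i, St.ones r c) : Br k)
          = (i, St.ones r ⟨(c.1+1) % (k+1), Nat.mod_lt _ k.succ_pos⟩) := by simp [stepf]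
      rw [hs] at h
      obtain ⟨b, rfl⟩ := ih _ _ h
      exact ⟨b+1, by rw [List.replicate_succ]⟩

lemma zeros_form (i : Fin (k+1)) :
    ∀ (v : List (Fin 2)) (c : Fin (k+1)),
      finf (run ((i, St.zeros c) : Br k) v) = true →
      ∃ a b, v = List.replicate a 0 ++ List.replicate b 1 := by
  intro v
  induction v with
  | nil => exact fun c _ => ⟨0, 0, rfl⟩
  | cons a v ih =>
    intro c h
    rw [run_cons] at h
    rcases fin2_cases a with rfl | rfl
    · rw [show stepf (0:Fin 2) ((i, St.zeros c) : Br k)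
          = (i, St.zeros ⟨(c.1+1) % (k+1), Nat.mod_lt _ k.succ_pos⟩) by simp [stepf]] at h
      obtain ⟨a', b', rfl⟩ := ih _ h
      exact ⟨a'+1, b', by rw [List.replicate_succ]; rfl⟩
    · rw [show stepf (1:Fin 2) ((i, St.zeros c) : Br k)
          = (i, St.ones c ⟨1 % (k+1), Nat.mod_lt _ k.succ_pos⟩) by simp [stepf]] at h
      obtain ⟨b', rfl⟩ := ones_form i v _ _ h
      exact ⟨0, b'+1, by rw [List.replicate_succ]; rfl⟩

end R1proof

namespace R1proof
variable {k : ℕ}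

lemma sum_det (s : Finset (Qk k)) (f : Qk k → Qk k) (q : Qk k) :
    ∑ p ∈ s, det f q p = if f q ∈ s then 1 else 0 := by
  simp only [det]
  rw [Finset.sum_ite_eq' s (f q) (fun _ => (1:ℝ))]

lemma sum_det_mul (s : Finset (Qk k)) (f : Qk k → Qk k) (q : Qk k) (g : Qk k → ℝ) :
    ∑ p ∈ s, det f q p * g p = if f q ∈ s then g (f q) else 0 := by
  simp only [det, ite_mul, one_mul, zero_mul]
  rw [Finset.sum_ite_eq' s (f q) g]

def accS (k : ℕ) : Finset (Qk k) := {Sum.inr true}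
def rejS (k : ℕ) : Finset (Qk k) := {Sum.inr false}
def nonS (k : ℕ) : Finset (Qk k) := Finset.univ \ (accS k ∪ rejS k)

lemma inl_mem_nonS (x : Option (Br k)) : (Sum.inl x : Qk k) ∈ nonS k := by
  simp [nonS, accS, rejS]

/-- The probabilistic transducer: branch uniformly into `k+1` deterministic
branches at the begin marker. -/
noncomputable def T (k : ℕ) : PFST (Qk k) (Fin 2) (Fin 3) where
  V a := det (stepQ a)
  Vbeg := fun q p => if q = Sum.inl none then (if p ∈ startSet k then ((k:ℝ)+1)⁻¹ else 0)
    else det id q p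
  Vend := det endQ
  out := outQ
  outBeg _ := []
  outEnd _ := []
  init := Sum.inl none
  acc := accS k
  rej := rejS k
  acc_disj_rej := by simp [accS, rejS]
  nonneg := by
    intro a q p
    simp only [det]
    split_ifs <;> norm_num
  nonnegBeg := by
    intro q p
    simp only [det]
    split_ifs <;> positivity
  nonnegEnd := by
    intro q p
    simp only [det]
    split_ifs <;> norm_num
  stochastic := by intro a q; rw [sum_det]; simp
  stochasticBeg := by
    intro q
    by_cases hq : q = Sum.inl none
    · simp only [hq, if_pos rfl, ite_true]
      rw [Finset.sum_ite_mem, Finset.univ_inter, Finset.sum_const]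
      have hcard : (startSet k).card = k + 1 := by
        rw [startSet, Finset.card_image_of_injective _ (by intro x y h; simpa using h)]
        simp
      rw [hcard, nsmul_eq_mul]
      push_cast
      exact mul_inv_cancel₀ (by positivity)
    · simp only [if_neg hq]
      rw [sum_det]
      simp
  stochasticEnd := by intro q; rw [sum_det]; simp
  endHalts := by
    intro q hq1 hq2 p hp1 hp2
    simp only [accS, rejS, Finset.mem_singleton] at hp1 hp2
    simp only [det]
    rw [if_neg]
    intro h
    unfold endQ at h
    cases hb : finQ q <;> rw [hb] at h
    · exact hp2 h
    · exact hp1 h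

lemma eq_append_iff' (x y w : List (Fin 3)) :
    w = x ++ y ↔ (x <+: w ∧ w.drop x.length = y) := by
  constructor
  · rintro rfl
    exact ⟨List.prefix_append _ _, List.drop_left⟩
  · rintro ⟨h1, h2⟩
    conv_lhs => rw [← List.prefix_iff_eq_append.mp h1]
    rw [h2]

/-- deterministic evaluation of the tail of the computation. -/
lemma pAcc_det (v : List (Fin 2)) : ∀ (s : Br k) (w : List (Fin 3)),
    pAccAux (accS k) (nonS k)
      ((v.map fun a => (det (stepQ a), outQ a)) ++ [(det endQ, fun _ => ([] : List (Fin 3)))])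
      (Sum.inl (some s)) w
    = if (finf (run s v) = true ∧ w = Wout s v) then 1 else 0 := by
  induction v with
  | nil =>
    intro s w
    simp only [List.map_nil, List.nil_append, run_nil, Wout_nil]
    rw [pAccAux]
    simp only [List.nil_prefix, if_pos, List.drop_zero, List.length_nil]
    rw [sum_det]
    have : ∀ p, pAccAux (accS k) (nonS k) ([] : List (Matrix (Qk k) (Qk k) ℝ × (Qk k → List (Fin 3)))) p w = 0 := by
      intro p; rw [pAccAux]
    simp only [this, mul_zero, Finset.sum_const_zero, add_zero]
    by_cases h1 : finf s = true <;> by_cases h2 : w = [] <;>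
      simp [endQ, finQ, accS, h1, h2]
  | cons a v ih =>
    intro s w
    simp only [List.map_cons, List.cons_append]
    rw [pAccAux]
    have ho : outQ a (Sum.inl (some s) : Qk k) = outf a s := rfl
    have hs : stepQ a (Sum.inl (some s) : Qk k) = Sum.inl (some (stepf a s)) := rfl
    simp only [ho, hs]
    rw [sum_det, sum_det_mul, hs]
    simp only [if_neg (by simp [accS] : (Sum.inl (some (stepf a s)) : Qk k) ∉ accS k),
      if_pos (inl_mem_nonS _), zero_mul, zero_add]
    rw [ih]
    rw [run_cons, Wout_cons]
    by_cases hp : outf a s <+: w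
    · rw [if_pos hp]
      by_cases hc : finf (run (stepf a s) v) = true ∧ w.drop (outf a s).length = Wout (stepf a s) v
      · rw [if_pos hc, if_pos ⟨hc.1, (eq_append_iff' _ _ _).mpr ⟨hp, hc.2⟩⟩]
      · rw [if_neg hc, if_neg]
        rintro ⟨hfin, hw⟩
        exact hc ⟨hfin, ((eq_append_iff' _ _ _).mp hw).2⟩
    · rw [if_neg hp, if_neg]
      rintro ⟨-, hw⟩
      exact hp ((eq_append_iff' _ _ _).mp hw).1

lemma prob_formula (v : List (Fin 2)) (w : List (Fin 3)) :
    (T k).prob v w = ((k:ℝ)+1)⁻¹ *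
      ∑ i : Fin (k+1), (if (finf (run ((i, St.zeros 0) : Br k) v) = true
          ∧ w = Wout ((i, St.zeros 0) : Br k) v) then (1:ℝ) else 0) := by
  have hT : (T k).acc = accS k := rfl
  have hT2 : Finset.univ \ ((T k).acc ∪ (T k).rej) = nonS k := rfl
  rw [PFST.prob, PFST.steps, hT2, hT, List.cons_append]
  rw [pAccAux.eq_2]
  have hob : (T k).outBeg (T k).init = [] := rfl
  simp only [hob, List.nil_prefix, if_pos, List.drop_zero, List.length_nil]
  have hacc : ∑ p ∈ accS k, (T k).Vbeg (T k).init p = 0 := by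
    simp [accS, T, startSet]
  rw [hacc, zero_mul, zero_add]
  have hVbeg : ∀ p, (T k).Vbeg (T k).init p = if p ∈ startSet k then ((k:ℝ)+1)⁻¹ else 0 := by
    intro p; simp [T]
  simp only [hVbeg, ite_mul, zero_mul]
  rw [Finset.sum_ite_mem]
  have hinter : nonS k ∩ startSet k = startSet k := by
    rw [Finset.inter_eq_right]
    intro p hp
    simp only [startSet, Finset.mem_image] at hp
    obtain ⟨i, -, rfl⟩ := hp
    exact inl_mem_nonS _
  rw [hinter, startSet, Finset.sum_image (by intro x _ y _ h; simpa using h)]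
  rw [Finset.mul_sum]
  congr 1
  funext i
  congr 1
  exact pAcc_det v (i, St.zeros 0) w

end R1proof



section relabel

variable {Q Q' Γ₁ Γ₂ : Type*} [DecidableEq Γ₂] [Fintype Q] [DecidableEq Q]
  [Fintype Q'] [DecidableEq Q']

omit [Fintype Q] [DecidableEq Q] [Fintype Q'] [DecidableEq Q'] in
lemma pAccAux_relabel (e : Q ≃ Q') (acc non : Finset Q) :
    ∀ (l : List (Matrix Q Q ℝ × (Q → List Γ₂))) (q : Q) (w : List Γ₂),
    pAccAux (acc.map e.toEmbedding) (non.map e.toEmbedding)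
      (l.map fun s => ((fun q' p' => s.1 (e.symm q') (e.symm p') : Matrix Q' Q' ℝ),
        fun q' => s.2 (e.symm q'))) (e q) w
    = pAccAux acc non l q w := by
  intro l
  induction l with
  | nil => intro q w; rfl
  | cons s l ih =>
    intro q w
    rw [List.map_cons, pAccAux.eq_2, pAccAux.eq_2]
    simp only [Equiv.symm_apply_apply, Finset.sum_map, Equiv.coe_toEmbedding, ih]

/-- transport of a pfst along a bijection of the state spaces. -/
noncomputable def PFST.relabel (T : PFST Q Γ₁ Γ₂) (e : Q ≃ Q') : PFST Q' Γ₁ Γ₂ where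
  V a := fun q p => T.V a (e.symm q) (e.symm p)
  Vbeg := fun q p => T.Vbeg (e.symm q) (e.symm p)
  Vend := fun q p => T.Vend (e.symm q) (e.symm p)
  out a q := T.out a (e.symm q)
  outBeg q := T.outBeg (e.symm q)
  outEnd q := T.outEnd (e.symm q)
  init := e T.init
  acc := T.acc.map e.toEmbedding
  rej := T.rej.map e.toEmbedding
  acc_disj_rej := (Finset.disjoint_map _).mpr T.acc_disj_rej
  nonneg a q p := T.nonneg a _ _
  nonnegBeg q p := T.nonnegBeg _ _
  nonnegEnd q p := T.nonnegEnd _ _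
  stochastic a q := by
    rw [← Equiv.sum_comp e (fun p => T.V a (e.symm q) (e.symm p))]
    simp only [Equiv.symm_apply_apply]
    exact T.stochastic a _
  stochasticBeg q := by
    rw [← Equiv.sum_comp e (fun p => T.Vbeg (e.symm q) (e.symm p))]
    simp only [Equiv.symm_apply_apply]
    exact T.stochasticBeg _
  stochasticEnd q := by
    rw [← Equiv.sum_comp e (fun p => T.Vend (e.symm q) (e.symm p))]
    simp only [Equiv.symm_apply_apply]
    exact T.stochasticEnd _
  endHalts q hq1 hq2 p hp1 hp2 := by
    simp only [Finset.mem_map_equiv] at hq1 hq2 hp1 hp2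
    exact T.endHalts _ hq1 hq2 _ hp1 hp2

lemma relabel_prob (T : PFST Q Γ₁ Γ₂) (e : Q ≃ Q') (v : List Γ₁) (w : List Γ₂) :
    (T.relabel e).prob v w = T.prob v w := by
  have hsteps : (T.relabel e).steps v = (T.steps v).map
      (fun s => ((fun q' p' => s.1 (e.symm q') (e.symm p') : Matrix Q' Q' ℝ),
        fun q' => s.2 (e.symm q'))) := by
    simp only [PFST.steps, PFST.relabel, List.map_append, List.map_cons, List.map_map,
      List.map_nil]
    rfl
  have hnon : Finset.univ \ ((T.relabel e).acc ∪ (T.relabel e).rej)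
      = (Finset.univ \ (T.acc ∪ T.rej)).map e.toEmbedding := by
    ext q'
    simp [PFST.relabel, Finset.mem_map_equiv]
  rw [PFST.prob, hnon, hsteps,
    show (T.relabel e).acc = T.acc.map e.toEmbedding from rfl,
    show (T.relabel e).init = e T.init from rfl]
  exact pAccAux_relabel e _ _ _ _ _

end relabel

/-- For every `ε > 0` there is a probabilistic finite state transducer
computing `R₁` with probability `1 - ε`. -/
theorem pfst_computes_R₁ (ε : ℝ) (hε : 0 < ε) :
    ∃ (n : ℕ) (T : PFST (Fin n) (Fin 2) (Fin 3)), T.Computes R₁ (1 - ε) := by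
  classical
  set k := ⌈ε⁻¹⌉₊ with hkdef
  have hkε : ((k:ℝ)+1)⁻¹ ≤ ε := by
    have h1 : ε⁻¹ ≤ (k:ℝ) := Nat.le_ceil ε⁻¹
    have h3 : (0:ℝ) < ε⁻¹ := by positivity
    calc ((k:ℝ)+1)⁻¹ ≤ (ε⁻¹)⁻¹ := by
          apply inv_anti₀ h3
          linarith
      _ = ε := inv_inv ε
  have hc0 : (0:ℝ) ≤ ((k:ℝ)+1)⁻¹ := by positivity
  refine ⟨Fintype.card (R1proof.Qk k), (R1proof.T k).relabel (Fintype.equivFin _), ?_⟩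
  intro v w
  have hprob : ∀ w' : List (Fin 3),
      ((R1proof.T k).relabel (Fintype.equivFin _)).prob v w' = (R1proof.T k).prob v w' :=
    fun w' => relabel_prob _ _ v w'
  constructor
  · rintro ⟨m, hv, hw⟩
    simp only at hv hw
    subst hv
    subst hw
    rw [hprob, R1proof.prob_formula]
    have hterm : ∀ i : Fin (k+1),
        (if (R1proof.finf (R1proof.run ((i, R1proof.St.zeros 0) : R1proof.Br k)
              (List.replicate m 0 ++ List.replicate m 1)) = true
            ∧ List.replicate m 2 = R1proof.Wout ((i, R1proof.St.zeros 0) : R1proof.Br k)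
              (List.replicate m 0 ++ List.replicate m 1)) then (1:ℝ) else 0) = 1 := by
      intro i
      obtain ⟨hf, hW⟩ := R1proof.main_run (k := k) m m i
      rw [if_pos]
      exact ⟨by rw [hf]; simp, by rw [hW, za_add_ob]⟩
    rw [Finset.sum_congr rfl (fun i _ => hterm i), Finset.sum_const, Finset.card_univ,
      Fintype.card_fin, nsmul_eq_mul, mul_one]
    have : ((k:ℝ)+1)⁻¹ * ((k:ℕ)+1 : ℝ) = 1 := by
      rw [inv_mul_cancel₀]
      positivity
    push_cast at this ⊢
    rw [this]
    linarith
  · intro hmem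
    rw [hprob, R1proof.prob_formula]
    by_cases hform : ∃ a b, v = List.replicate a 0 ++ List.replicate b 1
    · obtain ⟨a, b, rfl⟩ := hform
      by_cases hmod : a % (k+1) = b % (k+1)
      · by_cases hab : a = b
        · subst hab
          have hwne : w ≠ List.replicate a 2 := fun h => hmem ⟨a, rfl, h⟩
          have hterm : ∀ i : Fin (k+1),
              (if (R1proof.finf (R1proof.run ((i, R1proof.St.zeros 0) : R1proof.Br k)
                    (List.replicate a 0 ++ List.replicate a 1)) = true
                  ∧ w = R1proof.Wout ((i, R1proof.St.zeros 0) : R1proof.Br k)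
                    (List.replicate a 0 ++ List.replicate a 1)) then (1:ℝ) else 0) = 0 := by
            intro i
            rw [if_neg]
            rintro ⟨-, hww⟩
            obtain ⟨-, hW⟩ := R1proof.main_run (k := k) a a i
            rw [hW, za_add_ob] at hww
            exact hwne hww
          rw [Finset.sum_congr rfl (fun i _ => hterm i), Finset.sum_const_zero, mul_zero]
          linarith
        · -- `a ≠ b`, `a ≡ b [MOD k+1]` : at most one branch can produce `w`
          rw [Finset.sum_boole]
          have hcard : (Finset.univ.filter (fun i : Fin (k+1) =>
              R1proof.finf (R1proof.run ((i, R1proof.St.zeros 0) : R1proof.Br k)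
                  (List.replicate a 0 ++ List.replicate b 1)) = true
                ∧ w = R1proof.Wout ((i, R1proof.St.zeros 0) : R1proof.Br k)
                  (List.replicate a 0 ++ List.replicate b 1))).card ≤ 1 := by
            apply Finset.card_le_one.mpr
            intro i hi j hj
            simp only [Finset.mem_filter] at hi hj
            obtain ⟨-, -, hWi⟩ := hi
            obtain ⟨-, -, hWj⟩ := hj
            obtain ⟨-, hW1⟩ := R1proof.main_run (k := k) a b i
            obtain ⟨-, hW2⟩ := R1proof.main_run (k := k) a b j
            rw [hW1] at hWi
            rw [hW2] at hWj
            have hNN : za (k+1) i.1 a + ob (k+1) i.1 b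
                = za (k+1) j.1 a + ob (k+1) j.1 b := by
              have := (hWi.symm.trans hWj)
              have hlen := congrArg List.length this
              simpa using hlen
            have := N_inj (k+1) a b k.succ_pos hmod hab
              i.isLt.le j.isLt.le hNN
            exact Fin.ext this
          have hcR : ((Finset.univ.filter (fun i : Fin (k+1) =>
              R1proof.finf (R1proof.run ((i, R1proof.St.zeros 0) : R1proof.Br k)
                  (List.replicate a 0 ++ List.replicate b 1)) = true
                ∧ w = R1proof.Wout ((i, R1proof.St.zeros 0) : R1proof.Br k)
                  (List.replicate a 0 ++ List.replicate b 1))).card : ℝ) ≤ 1 := by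
            exact_mod_cast hcard
          calc ((k:ℝ)+1)⁻¹ * _ ≤ ((k:ℝ)+1)⁻¹ * 1 := mul_le_mul_of_nonneg_left hcR hc0
            _ = ((k:ℝ)+1)⁻¹ := mul_one _
            _ ≤ ε := hkε
            _ = 1 - (1 - ε) := by ring
      · -- residues differ : every branch rejects
        have hterm : ∀ i : Fin (k+1),
            (if (R1proof.finf (R1proof.run ((i, R1proof.St.zeros 0) : R1proof.Br k)
                  (List.replicate a 0 ++ List.replicate b 1)) = true
                ∧ w = R1proof.Wout ((i, R1proof.St.zeros 0) : R1proof.Br k)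
                  (List.replicate a 0 ++ List.replicate b 1)) then (1:ℝ) else 0) = 0 := by
          intro i
          rw [if_neg]
          rintro ⟨hf, -⟩
          obtain ⟨hf', -⟩ := R1proof.main_run (k := k) a b i
          rw [hf'] at hf
          exact hmod (of_decide_eq_true hf)
        rw [Finset.sum_congr rfl (fun i _ => hterm i), Finset.sum_const_zero, mul_zero]
        linarith
    · -- malformed input : every branch rejects
      have hterm : ∀ i : Fin (k+1),
          (if (R1proof.finf (R1proof.run ((i, R1proof.St.zeros 0) : R1proof.Br k) v) = true
              ∧ w = R1proof.Wout ((i, R1proof.St.zeros 0) : R1proof.Br k) v) then (1:ℝ) else 0)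
            = 0 := by
        intro i
        rw [if_neg]
        rintro ⟨hf, -⟩
        exact hform (R1proof.zeros_form i v 0 hf)
      rw [Finset.sum_congr rfl (fun i _ => hterm i), Finset.sum_const_zero, mul_zero]
      linarith
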